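/- arXiv:2104.08484 — 5 statements merged into one kernel-verified Lean document; each statement's English description precedes it below -/
import Mathlib

section
/- Let d ≥ 1, let a ∈ ℝ^d be a vector all of whose coordinates are non-zero, and let b ∈ ℝ. Then the d-dimensional Lebesgue measure of the set {x ∈ [0,1]^d : a·x ≤ b} equals the sum, over all vertices v of [0,1]^d (i.e., all v ∈ {0,1}^d) satisfying a·v ≤ b, of (−1)^{σ(v)} (b − a·v)^d / (d! · π(a)). -/
/-!
Write `g_k(t) = t₊^k / k!` for the truncated powers, so that `g₀` is the indicator of `[0, ∞)`
and the volume in question is `∫_{[0,1]^d} g₀(b - a·x) dx`. Since `g_{k+1}' = g_k` off `0`,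
integrating out one coordinate gives `∫₀¹ g_k(c - a t) dt = (g_{k+1}(c) - g_{k+1}(c - a)) / a`:
it raises the degree by one and takes a finite difference in `c`. By induction on the dimension,
`∫_{[0,1]^n} g_k(b - a·x) dx = Σ_v (-1)^{σ(v)} g_{n+k}(b - a·v) / π(a)`, and `k = 0` is the formula.
-/

open MeasureTheory Real Finset
open scoped Nat

noncomputable section

def truncPow (k : ℕ) (t : ℝ) : ℝ := if 0 ≤ t then t ^ k / k ! else 0

theorem truncPow_of_nonneg {k : ℕ} {t : ℝ} (ht : 0 ≤ t) : truncPow k t = t ^ k / k ! := if_pos ht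

theorem truncPow_of_neg {k : ℕ} {t : ℝ} (ht : t < 0) : truncPow k t = 0 := if_neg ht.not_ge

theorem truncPow_nonneg (k : ℕ) (t : ℝ) : 0 ≤ truncPow k t := by
  unfold truncPow; split_ifs with ht <;> positivity

theorem monotone_truncPow (k : ℕ) : Monotone (truncPow k) := by
  intro s t hst
  rcases lt_or_ge s 0 with hs | hs
  · rw [truncPow_of_neg hs]; exact truncPow_nonneg k t
  · rw [truncPow_of_nonneg hs, truncPow_of_nonneg (hs.trans hst)]
    gcongr

theorem continuous_truncPow_succ (k : ℕ) : Continuous (truncPow (k + 1)) :=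
  (continuous_pow (k + 1)).div_const _ |>.if_le continuous_const continuous_const continuous_id
    fun t ht => by simp [← ht]

theorem hasDerivAt_truncPow_succ (k : ℕ) {t : ℝ} (ht : t ≠ 0) :
    HasDerivAt (truncPow (k + 1)) (truncPow k t) t := by
  rcases ht.lt_or_gt with ht | ht
  · rw [truncPow_of_neg ht]
    refine (hasDerivAt_const t 0).congr_of_eventuallyEq ?_
    filter_upwards [Iio_mem_nhds ht] with s hs using truncPow_of_neg hs
  · rw [truncPow_of_nonneg ht.le]
    have h : HasDerivAt (fun s : ℝ => s ^ (k + 1) / (k + 1) !) (t ^ k / k !) t := by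
      refine ((hasDerivAt_pow (k + 1) t).div_const _).congr_deriv ?_
      rw [Nat.add_sub_cancel, Nat.factorial_succ, Nat.cast_mul]
      field_simp
    refine h.congr_of_eventuallyEq ?_
    filter_upwards [Ioi_mem_nhds ht] with s hs using truncPow_of_nonneg hs.le

theorem integral_truncPow (k : ℕ) (p q : ℝ) :
    ∫ u in p..q, truncPow k u = truncPow (k + 1) q - truncPow (k + 1) p :=
  integral_eq_of_hasDerivAt_off_countable _ _ (Set.countable_singleton 0)
    (continuous_truncPow_succ k).continuousOn
    (fun _ hu => hasDerivAt_truncPow_succ k hu.2)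
    ((monotone_truncPow k).intervalIntegrable)

theorem setIntegral_Icc_truncPow_sub_mul (k : ℕ) {a : ℝ} (ha : a ≠ 0) (c : ℝ) :
    ∫ t in Set.Icc (0 : ℝ) 1, truncPow k (c - a * t) =
      (truncPow (k + 1) c - truncPow (k + 1) (c - a)) / a := by
  rw [integral_Icc_eq_integral_Ioc, ← intervalIntegral.integral_of_le zero_le_one,
    intervalIntegral.integral_comp_sub_mul _ ha, integral_truncPow]
  simp [div_eq_inv_mul]

theorem integrable_truncPow_comp {α : Type*} [MeasurableSpace α] {μ : Measure α}
    [IsFiniteMeasure μ] (k : ℕ) {f : α → ℝ} (hf : Measurable f) {R : ℝ}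
    (hR : ∀ᵐ x ∂μ, f x ≤ R) : Integrable (fun x => truncPow k (f x)) μ := by
  refine .of_bound ((monotone_truncPow k).measurable.comp hf).aestronglyMeasurable
    (truncPow k R) ?_
  filter_upwards [hR] with x hx
  rw [Real.norm_of_nonneg (truncPow_nonneg k _)]
  exact monotone_truncPow k hx

theorem integral_pi_fin_succ {α E : Type*} [MeasurableSpace α] [NormedAddCommGroup E]
    [NormedSpace ℝ E] {n : ℕ} (μ : Measure α) [SigmaFinite μ] {f : (Fin (n + 1) → α) → E}
    (hf : Integrable f (Measure.pi fun _ => μ)) :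
    ∫ x, f x ∂(Measure.pi fun _ => μ) =
      ∫ y, ∫ t, f (Fin.cons t y) ∂μ ∂(Measure.pi fun _ => μ) := by
  have he := (measurePreserving_piFinSuccAbove (fun _ : Fin (n + 1) => μ) 0).symm
  rw [← he.integral_comp', integral_prod_symm]
  · simp only [MeasurableEquiv.piFinSuccAbove_symm_apply, Fin.insertNthEquiv_zero]
    rfl
  · exact (he.integrable_comp_emb (MeasurableEquiv.measurableEmbedding _)).mpr hf

def alternatingVertexSum {n : ℕ} (f : ℝ → ℝ) (a : Fin n → ℝ) (b : ℝ) : ℝ :=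
  ∑ ε : Fin n → Bool, (∏ i, if ε i then (-1 : ℝ) else 1) * f (b - ∑ i, if ε i then a i else 0)

theorem alternatingVertexSum_succ {n : ℕ} (f : ℝ → ℝ) (a : Fin (n + 1) → ℝ) (b : ℝ) :
    alternatingVertexSum f a b =
      alternatingVertexSum f (Fin.tail a) b - alternatingVertexSum f (Fin.tail a) (b - a 0) := by
  unfold alternatingVertexSum
  rw [← (Fin.consEquiv fun _ : Fin (n + 1) => Bool).sum_comp, Fintype.sum_prod_type,
    Fintype.sum_bool, ← sum_add_distrib, ← sum_sub_distrib]
  refine Finset.sum_congr rfl fun ε _ => ?_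
  simp only [Fin.consEquiv, Equiv.coe_fn_mk, Fin.prod_univ_succ, Fin.sum_univ_succ, Fin.cons_zero,
    Fin.cons_succ, Fin.tail, Bool.false_eq_true, ↓reduceIte, zero_add, sub_add_eq_sub_sub]
  ring

local notation "ν" => volume.restrict (Set.Icc (0 : ℝ) 1)

theorem integrable_truncPow_unitCube {n : ℕ} (k : ℕ) (a : Fin n → ℝ) (b : ℝ) :
    Integrable (fun x => truncPow k (b - ∑ i, a i * x i)) (Measure.pi fun _ => ν) := by
  refine integrable_truncPow_comp k (by fun_prop) (R := b + ∑ i, |a i|) ?_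
  have hcube : ∀ᵐ x ∂(Measure.pi fun _ : Fin n => ν), ∀ i, x i ∈ Set.Icc (0 : ℝ) 1 :=
    ae_all_iff.2 fun i => Measure.tendsto_eval_ae_ae.eventually (ae_restrict_mem measurableSet_Icc)
  filter_upwards [hcube] with x hx
  have h : ∀ i, -(a i * x i) ≤ |a i| := fun i => by
    have hxi : |x i| ≤ 1 := abs_le.2 ⟨by linarith [(hx i).1], (hx i).2⟩
    calc -(a i * x i) ≤ |a i| * |x i| := (neg_le_abs _).trans (abs_mul ..).le
      _ ≤ |a i| := mul_le_of_le_one_right (abs_nonneg _) hxi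
  have := sum_le_sum fun i (_ : i ∈ univ) => h i
  rw [sum_neg_distrib] at this
  linarith

theorem integral_truncPow_unitCube (n k : ℕ) (a : Fin n → ℝ) (ha : ∀ i, a i ≠ 0) (b : ℝ) :
    ∫ x, truncPow k (b - ∑ i, a i * x i) ∂(Measure.pi fun _ => ν) =
      alternatingVertexSum (truncPow (n + k)) a b / ∏ i, a i := by
  induction n generalizing k b with
  | zero =>
    rw [Measure.pi_of_empty, integral_dirac]
    simp [alternatingVertexSum]
  | succ n ih =>
    have hslice : ∀ y : Fin n → ℝ,
        ∫ t, truncPow k (b - ∑ i, a i * (Fin.cons t y : Fin (n + 1) → ℝ) i) ∂ν =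
        (truncPow (k + 1) (b - ∑ i, a i.succ * y i) -
          truncPow (k + 1) (b - a 0 - ∑ i, a i.succ * y i)) / a 0 := fun y => by
      have hcons : ∀ t, b - ∑ i, a i * (Fin.cons t y : Fin (n + 1) → ℝ) i =
          (b - ∑ i, a i.succ * y i) - a 0 * t := fun t => by
        simp only [Fin.sum_univ_succ, Fin.cons_zero, Fin.cons_succ]
        ring
      simp_rw [hcons, setIntegral_Icc_truncPow_sub_mul k (ha 0), sub_right_comm]
    have htail := ih (k + 1) (fun i => a i.succ) fun i => ha i.succ
    rw [integral_pi_fin_succ _ (integrable_truncPow_unitCube k a b)]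
    simp_rw [hslice]
    rw [integral_div, integral_sub (integrable_truncPow_unitCube _ _ _)
      (integrable_truncPow_unitCube _ _ _)]
    rw [htail, htail, alternatingVertexSum_succ, Fin.prod_univ_succ,
      show n + 1 + k = n + (k + 1) by omega, ← sub_div, div_div, mul_comm]
    rfl

theorem volume_unitCube_inter_halfSpace {n : ℕ} (a : Fin n → ℝ) (b : ℝ) :
    volume {x : Fin n → ℝ | (∀ i, x i ∈ Set.Icc (0 : ℝ) 1) ∧ ∑ i, a i * x i ≤ b} =
      ENNReal.ofReal (∫ x, truncPow 0 (b - ∑ i, a i * x i) ∂(Measure.pi fun _ => ν)) := by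
  have hH : MeasurableSet {x : Fin n → ℝ | ∑ i, a i * x i ≤ b} :=
    measurableSet_le (by fun_prop) measurable_const
  have hind : (fun x : Fin n → ℝ => truncPow 0 (b - ∑ i, a i * x i)) =
      {x | ∑ i, a i * x i ≤ b}.indicator 1 := by
    ext x
    simp [truncPow, Set.indicator_apply]
  rw [hind, integral_indicator_one hH, measureReal_def, ENNReal.ofReal_toReal (measure_ne_top _ _),
    ← Measure.restrict_pi_pi, Measure.restrict_apply hH, ← volume_pi]
  congr 1
  ext x
  simp only [Set.mem_inter_iff, Set.mem_univ_pi]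
  exact and_comm

end

theorem stmt_2_general (d : ℕ) (a : EuclideanSpace ℝ (Fin d))
    (ha : ∀ i, a i ≠ 0) (b : ℝ) :
    volume {x : EuclideanSpace ℝ (Fin d) |
        (∀ i, x i ∈ Set.Icc (0 : ℝ) 1) ∧ ∑ i, a i * x i ≤ b} =
    ENNReal.ofReal
      (∑ ε : Fin d → Bool,
        if (∑ i, if ε i then a i else 0) ≤ b then
          (-1 : ℝ) ^ (Finset.univ.filter fun i => ε i = true).card *
              (b - ∑ i, if ε i then a i else 0) ^ d /
            (d.factorial * ∏ i, a i)
        else 0) := by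
  have hcoords := EuclideanSpace.volume_preserving_symm_measurableEquiv_toLp (Fin d)
  refine (hcoords.measure_preimage_equiv
    {x : Fin d → ℝ | (∀ i, x i ∈ Set.Icc (0 : ℝ) 1) ∧ ∑ i, a i * x i ≤ b}).trans ?_
  rw [volume_unitCube_inter_halfSpace, integral_truncPow_unitCube d 0 _ ha, alternatingVertexSum,
    sum_div]
  congr 1
  refine Finset.sum_congr rfl fun ε _ => ?_
  rw [prod_ite, prod_const_one, prod_const, mul_one, add_zero]
  by_cases h : (∑ i, if ε i then a i else 0) ≤ b
  · rw [if_pos h, truncPow_of_nonneg (sub_nonneg.2 h)]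
    ring
  · rw [if_neg h, truncPow_of_neg (sub_neg.2 (not_le.1 h)), mul_zero, zero_div]

/-- **Barrow–Smith formula**. For `d ≥ 1` and `a` with all coordinates non-zero, the
`d`-dimensional Lebesgue measure of `{x ∈ [0,1]^d : a·x ≤ b}` is the sum, over the
vertices `v` of `[0,1]^d` with `a·v ≤ b`, of `(-1)^{σ(v)} (b - a·v)^d / (d! π(a))`.
Vertices are encoded by `ε : Fin d → Bool`, with `vᵢ = 1` iff `ε i = true`. -/
theorem stmt_2 (d : ℕ) (hd : 1 ≤ d) (a : EuclideanSpace ℝ (Fin d))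
    (ha : ∀ i, a i ≠ 0) (b : ℝ) :
    volume {x : EuclideanSpace ℝ (Fin d) |
        (∀ i, x i ∈ Set.Icc (0 : ℝ) 1) ∧ ∑ i, a i * x i ≤ b} =
    ENNReal.ofReal
      (∑ ε : Fin d → Bool,
        if (∑ i, if ε i then a i else 0) ≤ b then
          (-1 : ℝ) ^ (Finset.univ.filter fun i => ε i = true).card *
              (b - ∑ i, if ε i then a i else 0) ^ d /
            (d.factorial * ∏ i, a i)
        else 0) :=
  stmt_2_general d a ha b
end

section
/- Let d ≥ 5 and suppose √(d−2)/2 ≤ t ≤ √(d−1)/2. Then d^{d/2}/(d−1)! · (√d/2 − t)^{d−1} > (d−1)^{(d−1)/2}/(d−2)! · (√(d−1)/2 − t)^{d−2}. -/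
open Real

private lemma rp (m : ℕ) : ((m:ℝ)) ^ (((m:ℝ))/2) = Real.sqrt (m:ℝ) ^ m := by
  rw [Real.sqrt_eq_rpow, ← Real.rpow_natCast ((m:ℝ) ^ ((1:ℝ)/2)) m,
    ← Real.rpow_mul (by positivity : (0:ℝ) ≤ (m:ℝ))]
  congr 1
  ring

private lemma aux_growth (n : ℕ) (hn : 2 ≤ n) :
    ((n:ℝ)+4)^2 < ((n:ℝ)+5) * 2^(n+1) := by
  induction n, hn using Nat.le_induction with
  | base => norm_num
  | succ m hm ih =>
    have h2 : (0:ℝ) < 2^(m+1) := by positivity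
    have hm' : (2:ℝ) ≤ (m:ℝ) := by exact_mod_cast hm
    have key : (((m:ℝ)+5)^2) * ((m:ℝ)+5) ≤ (2*((m:ℝ)+6)) * (((m:ℝ)+4)^2) := by nlinarith
    have h3 : (2*((m:ℝ)+6)) * (((m:ℝ)+4)^2) < (2*((m:ℝ)+6)) * (((m:ℝ)+5) * 2^(m+1)) :=
      mul_lt_mul_of_pos_left ih (by linarith)
    have h6 : (((m:ℝ)+5)^2) * ((m:ℝ)+5) < (((m:ℝ)+6) * (2^(m+1)*2)) * ((m:ℝ)+5) := by
      nlinarith [key, h3]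
    have h7 := lt_of_mul_lt_mul_right h6 (by linarith : (0:ℝ) ≤ (m:ℝ)+5)
    push_cast
    rw [pow_succ (2:ℝ) (m+1)]
    linarith [h7]

private lemma aux_e (k : ℕ) (c : ℝ) (hc : 0 < c) (hkc : (k:ℝ) ≤ c) :
    (c+1)^k ≤ 4*c^k := by
  have h1 : c + 1 ≤ c * Real.exp (1/c) := by
    have h := Real.add_one_le_exp (1/c)
    have h' := mul_le_mul_of_nonneg_left h hc.le
    calc c + 1 = c * (1/c + 1) := by field_simp; ring
    _ ≤ c * Real.exp (1/c) := h'
  have h2 : (c+1)^k ≤ (c * Real.exp (1/c))^k := pow_le_pow_left₀ (by linarith) h1 k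
  rw [mul_pow] at h2
  have h4 : Real.exp (1/c) ^ k = Real.exp ((k:ℝ)/c) := by
    rw [← Real.exp_nat_mul]
    congr 1
    field_simp
  have h5 : Real.exp ((k:ℝ)/c) ≤ Real.exp 1 := by
    apply Real.exp_le_exp.mpr
    rw [div_le_one hc]
    exact hkc
  have h6 : Real.exp 1 ≤ 4 := by have := Real.exp_one_lt_d9; linarith
  calc (c+1)^k ≤ c^k * Real.exp (1/c)^k := h2
  _ = c^k * Real.exp ((k:ℝ)/c) := by rw [h4]
  _ ≤ c^k * 4 := mul_le_mul_of_nonneg_left (h5.trans h6) (by positivity)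
  _ = 4*c^k := by ring

private lemma aux_qp (k : ℕ) (c : ℝ) (p q : ℝ) (hc : 0 < c) (hkc : (k:ℝ) ≤ c)
    (hp : 0 ≤ p) (hq : 0 ≤ q) (hp2 : p^2 = c) (hq2 : q^2 = c+1) :
    q^k ≤ 2*p^k := by
  have h1 : (q^k)^2 = (c+1)^k := by rw [← pow_mul, mul_comm k 2, pow_mul, hq2]
  have h2 : (p^k)^2 = c^k := by rw [← pow_mul, mul_comm k 2, pow_mul, hp2]
  have h3 := aux_e k c hc hkc
  nlinarith [pow_nonneg hp k, pow_nonneg hq k, h1, h2, h3]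

private lemma key2 (n : ℕ) (p q w : ℝ) (hp : 0 < p) (hpq : p < q) (hqw : q < w)
    (hp2 : p^2 = (n:ℝ)+3) (hq2 : q^2 = (n:ℝ)+4) (hw2 : w^2 = (n:ℝ)+5) :
    q^(n+6) * ((q-p)/2)^(n+2) < 4 * w^(n+5) * ((w-q)/2) * ((w-p)/2)^(n+2) := by
  have hq0 : 0 < q := hp.trans hpq
  have hw0 : 0 < w := hq0.trans hqw
  rcases n with _ | _ | m
  · norm_num at hp2 hq2 hw2 ⊢
    have hqe : q = 2 := by
      have h : (q-2)*(q+2) = 0 := by linear_combination hq2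
      rcases mul_eq_zero.mp h with h' | h' <;> linarith
    subst hqe
    have hpl : 1.7320508 < p := by nlinarith [hp2, hp]
    have hwu : w < 2.2360680 := by nlinarith [hw2, hw0]
    have hpw : p*w < 3.8729834 := by
      have h15 : (p*w)^2 = 15 := by rw [mul_pow, hp2, hw2]; norm_num
      nlinarith [h15, mul_pos hp hw0]
    have e1 : ((w-p)/2)^2 = 2 - (p*w)/2 := by linear_combination hw2/4 + hp2/4
    have e2 : ((2-p)/2)^2 = (7-4*p)/4 := by linear_combination hp2/4
    have e3 : w^5 = 25*w := by linear_combination (w^3+5*w)*hw2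
    have e4 : w^3*p = 5*(p*w) := by linear_combination (p*w)*hw2
    have e5 : w^2*p = 5*p := by linear_combination p*hw2
    rw [e1, e2, e3]
    nlinarith [hpl, hwu, hpw, hw2, e4, e5]
  · norm_num at hp2 hq2 hw2 ⊢
    have hpe : p = 2 := by
      have h : (p-2)*(p+2) = 0 := by linear_combination hp2
      rcases mul_eq_zero.mp h with h' | h' <;> linarith
    subst hpe
    have hql : 2.2360679 < q := by nlinarith [hq2, hq0]
    have hwu : w < 2.4494898 := by nlinarith [hw2, hw0]
    have hwq : w*q < 5.4772256 := by
      have h30 : (w*q)^2 = 30 := by rw [mul_pow, hq2, hw2]; norm_num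
      nlinarith [h30, mul_pos hw0 hq0]
    have e1 : q^7 = 125*q := by linear_combination (q^5+5*q^3+25*q)*hq2
    have e2 : ((q-2)/2)^3 = (17*q-38)/8 := by linear_combination ((q-6)/8)*hq2
    have e3 : w^6 = 216 := by linear_combination (w^4+6*w^2+36)*hw2
    have e4 : ((w-2)/2)^3 = (18*w-44)/8 := by linear_combination ((w-6)/8)*hw2
    rw [e1, e2, e3, e4]
    nlinarith [hql, hwu, hwq, hq2, hw2]
  · -- general case n = m+2, d = m+7
    push_cast at hp2 hq2 hw2
    have hp2' : p^2 = (m:ℝ)+5 := by linarith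
    have hq2' : q^2 = (m:ℝ)+6 := by linarith
    have hw2' : w^2 = (m:ℝ)+7 := by linarith
    show q^(m+8) * ((q-p)/2)^(m+4) < 4 * w^(m+7) * ((w-q)/2) * ((w-p)/2)^(m+4)
    have h1 : 1 ≤ (4*((w-q)/2))*w := by nlinarith [sq_nonneg (w-q)]
    have h2 : 1 ≤ 2*w*((w-p)/2) := by nlinarith [sq_nonneg (w-p)]
    have h3 : ((q-p)/2)*(4*p) ≤ 1 := by nlinarith [sq_nonneg (q-p)]
    have h4 : q^(m+4) ≤ 2*p^(m+4) :=
      aux_qp (m+4) ((m:ℝ)+5) p q (by positivity) (by push_cast; linarith)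
        hp.le hq0.le hp2' (by linarith)
    have hg0 := aux_growth (m+2) (by omega)
    have hg : 2*q^4 < w^2 * 2^(m+4) := by
      have hq4 : q^4 = ((m:ℝ)+6)^2 := by rw [show q^4 = (q^2)^2 by ring, hq2']
      push_cast at hg0
      rw [hq4, hw2', pow_succ (2:ℝ) (m+3)]
      linarith
    have hcpos : (0:ℝ) < (4*p)^(m+4)*(2*w)^(m+4) := by positivity
    apply lt_of_mul_lt_mul_right _ hcpos.le
    have h44 : (4:ℝ)^(m+4) = 2^(m+4)*2^(m+4) := by rw [← mul_pow]; norm_num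
    have hident : 4*w^(m+7)*((w-q)/2)*((w-p)/2)^(m+4) * ((4*p)^(m+4)*(2*w)^(m+4))
        = (4*((w-q)/2)*w) * ((2*w*((w-p)/2))^(m+4))
          * ((w^2*w^(m+4)) * ((4*p)^(m+4))) := by
      rw [mul_pow (4:ℝ) p, mul_pow (2:ℝ) w, mul_pow (2*w) ((w-p)/2)]
      ring
    calc q^(m+8) * ((q-p)/2)^(m+4) * ((4*p)^(m+4)*(2*w)^(m+4))
        = (q^4*q^(m+4)) * ((((q-p)/2)*(4*p))^(m+4)) * (2*w)^(m+4) := by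
          rw [mul_pow (4:ℝ) p, mul_pow ((q-p)/2) (4*p), mul_pow (4:ℝ) p]
          ring
      _ ≤ (q^4*(2*p^(m+4))) * (2*w)^(m+4) := by
          have e1 : ((((q-p)/2)*(4*p))^(m+4)) ≤ 1 :=
            pow_le_one₀ (mul_nonneg (by linarith) (by linarith)) h3
          have e2 : (q^4*q^(m+4)) * ((((q-p)/2)*(4*p))^(m+4)) ≤ (q^4*q^(m+4)) * 1 :=
            mul_le_mul_of_nonneg_left e1 (by positivity)
          have e3 : q^4*q^(m+4) ≤ q^4*(2*p^(m+4)) :=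
            mul_le_mul_of_nonneg_left h4 (by positivity)
          have e4 : (q^4*q^(m+4)) * ((((q-p)/2)*(4*p))^(m+4)) ≤ q^4*(2*p^(m+4)) := by
            rw [mul_one] at e2; exact e2.trans e3
          exact mul_le_mul_of_nonneg_right e4 (by positivity)
      _ = (2*q^4) * (p^(m+4)*(2*w)^(m+4)) := by ring
      _ < (w^2*2^(m+4)) * (p^(m+4)*(2*w)^(m+4)) := by
          apply mul_lt_mul_of_pos_right hg
          positivity
      _ = (1*1) * ((w^2*w^(m+4)) * ((4*p)^(m+4))) := by
          rw [mul_pow (4:ℝ) p, h44, mul_pow (2:ℝ) w]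
          ring
      _ ≤ ((4*((w-q)/2)*w) * ((2*w*((w-p)/2))^(m+4)))
            * ((w^2*w^(m+4)) * ((4*p)^(m+4))) := by
          have hT : (0:ℝ) ≤ (w^2*w^(m+4)) * ((4*p)^(m+4)) := by positivity
          have hb : (1:ℝ)*1 ≤ (4*((w-q)/2)*w) * ((2*w*((w-p)/2))^(m+4)) :=
            mul_le_mul h1 (one_le_pow₀ h2) zero_le_one (zero_le_one.trans h1)
          exact mul_le_mul_of_nonneg_right hb hT
      _ = 4*w^(m+7)*((w-q)/2)*((w-p)/2)^(m+4) * ((4*p)^(m+4)*(2*w)^(m+4)) := by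
          exact hident.symm

private lemma core (n : ℕ) (p q w t : ℝ) (hp : 0 < p) (hpq : p < q) (hqw : q < w)
    (hp2 : p^2 = (n:ℝ)+3) (hq2 : q^2 = (n:ℝ)+4) (hw2 : w^2 = (n:ℝ)+5)
    (ht1 : p/2 ≤ t) (ht2 : t ≤ q/2) :
    q^(n+6) * (q/2 - t)^(n+3) < w^(n+5) * (w/2 - t)^(n+4) := by
  have hq0 : 0 < q := hp.trans hpq
  have hw0 : 0 < w := hq0.trans hqw
  have hX0 : 0 ≤ q/2 - t := by linarith
  rcases hX0.eq_or_lt with h0 | hXpos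
  · rw [← h0, zero_pow (by omega), mul_zero]
    have hB : 0 < w/2 - t := by linarith
    exact mul_pos (pow_pos hw0 _) (pow_pos hB _)
  · have ha0 : 0 < (q-p)/2 := by linarith
    have he0 : 0 < (w-q)/2 := by linarith
    have hXa : q/2 - t ≤ (q-p)/2 := by linarith
    have hK := key2 n p q w hp hpq hqw hp2 hq2 hw2
    have hBB : w/2 - t = (q/2 - t) + (w-q)/2 := by ring
    rw [hBB]
    set X := q/2 - t with hXdef
    set a := (q-p)/2 with hadef
    set e := (w-q)/2 with hedef
    have hc : (0:ℝ) < a^(n+2) := pow_pos ha0 _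
    apply lt_of_mul_lt_mul_right _ hc.le
    have c1 : 4*e*X ≤ (X+e)^2 := by nlinarith [sq_nonneg (X-e)]
    have c2 : ((w-p)/2)*X ≤ (X+e)*a := by
      have h := mul_le_mul_of_nonneg_left hXa he0.le
      have hwp : (w-p)/2 = a + e := by rw [hadef, hedef]; ring
      rw [hwp]
      nlinarith [h]
    have c2' : (((w-p)/2)*X)^(n+2) ≤ ((X+e)*a)^(n+2) :=
      pow_le_pow_left₀ (mul_nonneg (by linarith) hXpos.le) c2 _
    calc q^(n+6)*X^(n+3)*a^(n+2)
        = (q^(n+6)*a^(n+2))*(X^(n+2)*X) := by ring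
      _ < (4*w^(n+5)*e*((w-p)/2)^(n+2))*(X^(n+2)*X) :=
          mul_lt_mul_of_pos_right hK (mul_pos (pow_pos hXpos _) hXpos)
      _ = w^(n+5)*((4*e*X)*(((w-p)/2)*X)^(n+2)) := by rw [mul_pow]; ring
      _ ≤ w^(n+5)*(((X+e)^2)*((X+e)*a)^(n+2)) := by
          apply mul_le_mul_of_nonneg_left _ (by positivity)
          exact mul_le_mul c1 c2' (pow_nonneg (mul_nonneg (by linarith) hXpos.le) _)
            (by positivity)
      _ = w^(n+5)*(X+e)^(n+4)*a^(n+2) := by rw [mul_pow]; ring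

/-- **Proposition (monotonicity of the bound in the dimension)**. If `d ≥ 5` and
`√(d-2)/2 ≤ t ≤ √(d-1)/2`, then
`d^{d/2}/(d-1)! (√d/2 - t)^{d-1} > (d-1)^{(d-1)/2}/(d-2)! (√(d-1)/2 - t)^{d-2}`. -/
theorem stmt_9 (d : ℕ) (hd : 5 ≤ d) (t : ℝ)
    (ht1 : Real.sqrt ((d : ℝ) - 2) / 2 ≤ t) (ht2 : t ≤ Real.sqrt ((d : ℝ) - 1) / 2) :
    ((d : ℝ) - 1) ^ (((d : ℝ) - 1) / 2) / (d - 2).factorial *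
        (Real.sqrt ((d : ℝ) - 1) / 2 - t) ^ (d - 2) <
      (d : ℝ) ^ ((d : ℝ) / 2) / (d - 1).factorial * (Real.sqrt d / 2 - t) ^ (d - 1) := by
  obtain ⟨n, rfl⟩ : ∃ n, d = n + 5 := ⟨d - 5, by omega⟩
  have hc3 : ((n+5:ℕ):ℝ) - 2 = ((n+3:ℕ):ℝ) := by push_cast; ring
  have hc4 : ((n+5:ℕ):ℝ) - 1 = ((n+4:ℕ):ℝ) := by push_cast; ring
  rw [hc4] at ht2 ⊢
  rw [hc3] at ht1
  rw [show n+5-2 = n+3 from by omega, show n+5-1 = n+4 from by omega]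
  rw [rp (n+4), rp (n+5)]
  set p := Real.sqrt ((n+3:ℕ):ℝ) with hpdef
  set q := Real.sqrt ((n+4:ℕ):ℝ) with hqdef
  set w := Real.sqrt ((n+5:ℕ):ℝ) with hwdef
  have hp : 0 < p := Real.sqrt_pos.mpr (by positivity)
  have hpq : p < q := Real.sqrt_lt_sqrt (by positivity) (by push_cast; linarith)
  have hqw : q < w := Real.sqrt_lt_sqrt (by positivity) (by push_cast; linarith)
  have hp2 : p^2 = (n:ℝ)+3 := by
    rw [hpdef, Real.sq_sqrt (by positivity)]; push_cast; ring
  have hq2 : q^2 = (n:ℝ)+4 := by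
    rw [hqdef, Real.sq_sqrt (by positivity)]; push_cast; ring
  have hw2 : w^2 = (n:ℝ)+5 := by
    rw [hwdef, Real.sq_sqrt (by positivity)]; push_cast; ring
  have hcore := core n p q w t hp hpq hqw hp2 hq2 hw2 ht1 ht2
  have hF : (0:ℝ) < ((n+3).factorial : ℝ) := by exact_mod_cast (n+3).factorial_pos
  have hF4 : (((n+4).factorial : ℕ) : ℝ) = ((n:ℝ)+4) * ((n+3).factorial : ℝ) := by
    rw [show n+4 = (n+3)+1 from rfl, Nat.factorial_succ]; push_cast; ring
  have hF4p : (0:ℝ) < ((n+4).factorial : ℝ) := by exact_mod_cast (n+4).factorial_pos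
  rw [div_mul_eq_mul_div, div_mul_eq_mul_div, div_lt_div_iff₀ hF hF4p, hF4]
  calc q^(n+4) * (q/2 - t)^(n+3) * (((n:ℝ)+4) * ((n+3).factorial : ℝ))
      = (q^(n+4)*((n:ℝ)+4) * (q/2 - t)^(n+3)) * ((n+3).factorial : ℝ) := by ring
    _ = (q^(n+6) * (q/2 - t)^(n+3)) * ((n+3).factorial : ℝ) := by
        rw [show q^(n+6) = q^(n+4)*q^2 from by ring, hq2]
    _ < (w^(n+5) * (w/2 - t)^(n+4)) * ((n+3).factorial : ℝ) :=
        mul_lt_mul_of_pos_right hcore hF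
    _ = w^(n+5) * (w/2 - t)^(n+4) * ((n+3).factorial : ℝ) := by ring
end

section
/- Let d ≥ 6 and let y ∈ (0,1). With α = 2 − 2y^{d−1} − (d−1)(1−y)(1+y^{d−2}), β = (d−1)(1−y)²(1−y^{d−2}), and γ = −2(1−y)²(1−y^{d−1}), the quadratic equation αx² + βx + γ = 0 has no solution x in the interval [1,+∞). -/
open Finset

private theorem tel (y : ℝ) (c : ℕ → ℝ) (M : ℕ) :
    (1 - y) * ∑ t ∈ range (M + 1), c t * y ^ t
      = c 0 + (∑ t ∈ range M, (c (t + 1) - c t) * y ^ (t + 1)) - c M * y ^ (M + 1) := by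
  induction M with
  | zero => simp; ring
  | succ M ih =>
    rw [sum_range_succ (f := fun t => c t * y ^ t),
        sum_range_succ (f := fun t => (c (t + 1) - c t) * y ^ (t + 1))]
    linear_combination ih

private theorem gs (y : ℝ) (n : ℕ) : (1 - y) * ∑ t ∈ range n, y ^ t = 1 - y ^ n := by
  linear_combination -geom_sum_mul y n

private theorem idD (y : ℝ) (k : ℕ) :
    (1-y) * ∑ t ∈ range (k+4), (((t:ℝ)+1)*(((k:ℝ)+3)-(t:ℝ)))*y^t
      = ∑ t ∈ range (k+4), (((k:ℝ)+3)-2*(t:ℝ))*y^t := by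
  have h := tel y (fun t => ((t:ℝ)+1)*(((k:ℝ)+3)-(t:ℝ))) (k+3)
  push_cast at h
  rw [show k+4 = k+3+1 from rfl,
      sum_range_succ' (f := fun t => (((k:ℝ)+3)-2*(t:ℝ))*y^t)]
  have hs : ∑ t ∈ range (k+3), ((((t:ℝ)+1)+1)*(((k:ℝ)+3)-((t:ℝ)+1)) - ((t:ℝ)+1)*(((k:ℝ)+3)-(t:ℝ)))*y^(t+1)
      = ∑ t ∈ range (k+3), (((k:ℝ)+3)-2*((t:ℝ)+1))*y^(t+1) :=
    sum_congr rfl fun t _ => by ring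
  push_cast
  linear_combination h + hs

private theorem idI (y : ℝ) (k : ℕ) :
    (1-y) * ∑ t ∈ range (k+4), (((k:ℝ)+3)-2*(t:ℝ))*y^t
      = ((k:ℝ)+5)*(1+y^(k+4)) - 2*∑ t ∈ range (k+5), y^t := by
  have h := tel y (fun t => (((k:ℝ)+3)-2*(t:ℝ))) (k+3)
  push_cast at h
  rw [show k+5 = k+4+1 from rfl, sum_range_succ (f := fun t => y^t),
      show k+4 = k+3+1 from rfl, sum_range_succ' (f := fun t => y^t)]
  have hs : ∑ t ∈ range (k+3), ((((k:ℝ)+3)-2*((t:ℝ)+1)) - (((k:ℝ)+3)-2*(t:ℝ)))*y^(t+1)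
      = -2 * ∑ t ∈ range (k+3), y^(t+1) := by
    rw [mul_sum]; exact sum_congr rfl fun t _ => by ring
  push_cast
  linear_combination h + hs

private theorem idVU (y : ℝ) (k : ℕ) :
    (∑ t ∈ range (k+4), (((k:ℝ)+3)-2*(t:ℝ))*y^t) + 2*((k:ℝ)+5)*y^(k+3)
        - 2*∑ t ∈ range (k+5), y^t
      = (1-y) * ((∑ t ∈ range (k+2), (((t:ℝ)+1)*(((k:ℝ)+1)-(t:ℝ)))*y^t)
          - ((k:ℝ)+3)*y^(k+2) + 2*y^(k+3)) := by
  have h := tel y (fun t => ((t:ℝ)+1)*(((k:ℝ)+1)-(t:ℝ))) (k+1)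
  push_cast at h
  rw [show k+4 = k+3+1 from rfl, sum_range_succ' (f := fun t => (((k:ℝ)+3)-2*(t:ℝ))*y^t)]
  push_cast
  rw [show k+3 = k+2+1 from rfl,
      sum_range_succ (f := fun t => (((k:ℝ)+3)-2*((t:ℝ)+1))*y^(t+1)) (n := k+2),
      sum_range_succ (f := fun t => (((k:ℝ)+3)-2*((t:ℝ)+1))*y^(t+1)) (n := k+1)]
  rw [show k+5 = k+4+1 from rfl, sum_range_succ' (f := fun t => y^t),
      show k+4 = k+3+1 from rfl,
      sum_range_succ (f := fun t => y^(t+1)) (n := k+3),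
      show k+3 = k+2+1 from rfl,
      sum_range_succ (f := fun t => y^(t+1)) (n := k+2),
      sum_range_succ (f := fun t => y^(t+1)) (n := k+1)]
  have hs : ∑ x ∈ range (k+1), (((k:ℝ)+3)-2*((x:ℝ)+1))*y^(x+1)
      = (∑ x ∈ range (k+1), (((x:ℝ)+1+1)*(((k:ℝ)+1)-((x:ℝ)+1)) - ((x:ℝ)+1)*(((k:ℝ)+1)-(x:ℝ)))*y^(x+1))
        + 2*∑ x ∈ range (k+1), y^(x+1) := by
    rw [mul_sum, ← sum_add_distrib]
    exact sum_congr rfl fun t _ => by ring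
  push_cast
  linear_combination -h + hs

private theorem Qpos (y : ℝ) (k : ℕ) (h0 : 0 ≤ y) (h1 : y ≤ 1) :
    ((k:ℝ)+5) * ∑ t ∈ range (k+4), y^t
      ≤ 2 * ∑ t ∈ range (k+4), (((t:ℝ)+1)*(((k:ℝ)+3)-(t:ℝ)))*y^t := by
  have e : 2 * (∑ t ∈ range (k+4), (((t:ℝ)+1)*(((k:ℝ)+3)-(t:ℝ)))*y^t)
        - ((k:ℝ)+5) * ∑ t ∈ range (k+4), y^t
      = ∑ t ∈ range (k+4), (2*((t:ℝ)+1)*(((k:ℝ)+3)-(t:ℝ)) - ((k:ℝ)+5))*y^t := by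
    rw [mul_sum, mul_sum, ← sum_sub_distrib]
    exact sum_congr rfl fun t _ => by ring
  have hc : ∀ t ∈ range (k+3), (0:ℝ) ≤ 2*((t:ℝ)+1)*(((k:ℝ)+3)-(t:ℝ)) - ((k:ℝ)+5) := by
    intro t ht
    have ht' : (t:ℝ) ≤ (k:ℝ)+2 := by
      have := mem_range.mp ht; exact_mod_cast Nat.cast_le.mpr (by omega : t ≤ k+2)
    have h2 : (0:ℝ) ≤ (t:ℝ) := Nat.cast_nonneg t
    nlinarith [mul_nonneg h2 (by linarith : (0:ℝ) ≤ (k:ℝ)+2-(t:ℝ))]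
  have hpow : ∀ t ∈ range (k+3), y^(k+3) ≤ y^t := by
    intro t ht
    exact pow_le_pow_of_le_one h0 h1 (by have := mem_range.mp ht; omega)
  have big : ∑ t ∈ range (k+3), (2*((t:ℝ)+1)*(((k:ℝ)+3)-(t:ℝ)) - ((k:ℝ)+5))*y^(k+3)
      ≤ ∑ t ∈ range (k+3), (2*((t:ℝ)+1)*(((k:ℝ)+3)-(t:ℝ)) - ((k:ℝ)+5))*y^t :=
    sum_le_sum fun t ht => mul_le_mul_of_nonneg_left (hpow t ht) (hc t ht)
  have sub : ∑ t ∈ range 3, (2*((t:ℝ)+1)*(((k:ℝ)+3)-(t:ℝ)) - ((k:ℝ)+5))*y^(k+3)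
      ≤ ∑ t ∈ range (k+3), (2*((t:ℝ)+1)*(((k:ℝ)+3)-(t:ℝ)) - ((k:ℝ)+5))*y^(k+3) := by
    apply sum_le_sum_of_subset_of_nonneg
    · exact range_subset_range.mpr (by omega)
    · intro t ht _; exact mul_nonneg (hc t ht) (pow_nonneg h0 _)
  have sub3 : ∑ t ∈ range 3, (2*((t:ℝ)+1)*(((k:ℝ)+3)-(t:ℝ)) - ((k:ℝ)+5))*y^(k+3)
      = (9*(k:ℝ)+5)*y^(k+3) := by
    rw [sum_range_succ, sum_range_succ, sum_range_one]
    push_cast; ring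
  rw [← sub_nonneg, e, sum_range_succ]
  push_cast
  have hyk : (0:ℝ) ≤ y^(k+3) := pow_nonneg h0 _
  nlinarith [big, sub, sub3, hyk, (Nat.cast_nonneg k : (0:ℝ) ≤ (k:ℝ)), mul_nonneg (by positivity : (0:ℝ) ≤ 8*(k:ℝ)) hyk]

private theorem Upos (y : ℝ) (k : ℕ) (h0 : 0 < y) (h1 : y < 1) :
    0 < (∑ t ∈ range (k+2), (((t:ℝ)+1)*(((k:ℝ)+1)-(t:ℝ)))*y^t)
        - ((k:ℝ)+3)*y^(k+2) + 2*y^(k+3) := by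
  rcases Nat.eq_zero_or_pos k with rfl | hk
  · rw [sum_range_succ, sum_range_one]
    norm_num
    nlinarith [mul_pos (mul_pos (sub_pos.mpr h1) (sub_pos.mpr h1))
      (by linarith : (0:ℝ) < 1+2*y)]
  · have hc : ∀ t ∈ range (k+2), (0:ℝ) ≤ ((t:ℝ)+1)*(((k:ℝ)+1)-(t:ℝ)) := by
      intro t ht
      have ht' : (t:ℝ) ≤ (k:ℝ)+1 := by
        exact_mod_cast Nat.cast_le.mpr (by have := mem_range.mp ht; omega : t ≤ k+1)
      have h2 : (0:ℝ) ≤ (t:ℝ) := Nat.cast_nonneg t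
      nlinarith
    have sub : ∑ t ∈ range 2, (((t:ℝ)+1)*(((k:ℝ)+1)-(t:ℝ)))*y^t
        ≤ ∑ t ∈ range (k+2), (((t:ℝ)+1)*(((k:ℝ)+1)-(t:ℝ)))*y^t := by
      apply sum_le_sum_of_subset_of_nonneg
      · exact range_subset_range.mpr (by omega)
      · intro t ht _; exact mul_nonneg (hc t ht) (pow_nonneg h0.le _)
    have sub2 : ∑ t ∈ range 2, (((t:ℝ)+1)*(((k:ℝ)+1)-(t:ℝ)))*y^t
        = ((k:ℝ)+1) + 2*(k:ℝ)*y := by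
      rw [sum_range_succ, sum_range_one]; push_cast; ring
    have p1 : y^(k+2) ≤ 1 := pow_le_one₀ h0.le h1.le
    have p2 : y^(k+2) ≤ y := by
      calc y^(k+2) ≤ y^1 := pow_le_pow_of_le_one h0.le h1.le (by omega)
      _ = y := pow_one y
    have p3 : (0:ℝ) < y^(k+3) := pow_pos h0 _
    have hk' : (1:ℝ) ≤ (k:ℝ) := by exact_mod_cast hk
    nlinarith [sub, sub2, mul_le_mul_of_nonneg_left p1 (by linarith : (0:ℝ) ≤ (k:ℝ)+1),
      mul_le_mul_of_nonneg_left p2 (by linarith : (0:ℝ) ≤ 2*(k:ℝ))]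

/-- **Proposition 3.1**. For `d ≥ 6` and `y ∈ (0,1)`, the quadratic equation
`αx² + βx + γ = 0`, with `α = 2 - 2y^{d-1} - (d-1)(1-y)(1+y^{d-2})`,
`β = (d-1)(1-y)²(1-y^{d-2})` and `γ = -2(1-y)²(1-y^{d-1})`, has no solution in
`[1,+∞)`. -/
theorem stmt_11 (d : ℕ) (hd : 6 ≤ d) (y : ℝ) (hy : y ∈ Set.Ioo (0 : ℝ) 1) :
    ¬∃ x : ℝ, 1 ≤ x ∧
      (2 - 2 * y ^ (d - 1) - ((d : ℝ) - 1) * (1 - y) * (1 + y ^ (d - 2))) * x ^ 2 +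
          ((d : ℝ) - 1) * (1 - y) ^ 2 * (1 - y ^ (d - 2)) * x +
          (-2 * (1 - y) ^ 2 * (1 - y ^ (d - 1))) = 0 := by
  obtain ⟨hy0, hy1⟩ := hy
  rintro ⟨x, hx, heq⟩
  obtain ⟨k, rfl⟩ : ∃ k, d = k + 6 := ⟨d - 6, by omega⟩
  rw [show k+6-1 = k+5 from rfl, show k+6-2 = k+4 from rfl] at heq
  push_cast at heq
  have i1 := idD y k
  have i2 := idI y k
  have i3 := idVU y k
  have g5 := gs y (k+5)
  have g4 := gs y (k+4)
  have hq := Qpos y k hy0.le hy1.le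
  have hu := Upos y k hy0 hy1
  set Q : ℝ := ∑ t ∈ range (k+4), (((t:ℝ)+1)*(((k:ℝ)+3)-(t:ℝ)))*y^t with hQd
  set D : ℝ := ∑ t ∈ range (k+4), (((k:ℝ)+3)-2*(t:ℝ))*y^t with hDd
  set G : ℝ := ∑ t ∈ range (k+5), y^t with hGd
  set G1 : ℝ := ∑ t ∈ range (k+4), y^t with hG1d
  set U : ℝ := (∑ t ∈ range (k+2), (((t:ℝ)+1)*(((k:ℝ)+1)-(t:ℝ)))*y^t)
      - ((k:ℝ)+3)*y^(k+2) + 2*y^(k+3) with hUd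
  -- clean forms of the coefficients
  have heq' : (2 - 2*y^(k+5) - ((k:ℝ)+5)*(1-y)*(1+y^(k+4)))*x^2
      + (((k:ℝ)+5)*(1-y)^2*(1-y^(k+4)))*x
      + (-2*(1-y)^2*(1-y^(k+5))) = 0 := by linear_combination heq
  -- beta ≥ 0
  have hy4 : y^(k+4) ≤ 1 := pow_le_one₀ hy0.le hy1.le
  have hy5 : y^(k+5) ≤ 1 := pow_le_one₀ hy0.le hy1.le
  have h1y : (0:ℝ) ≤ 1 - y := by linarith
  have hBeta : (0:ℝ) ≤ ((k:ℝ)+5)*(1-y)^2*(1-y^(k+4)) := by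
    apply mul_nonneg (mul_nonneg (by positivity) (sq_nonneg _)); linarith
  -- 2A + B = -(1-y)^3 * (2Q - (k+5) G1)
  have e2 : 2*(2 - 2*y^(k+5) - ((k:ℝ)+5)*(1-y)*(1+y^(k+4)))
        + ((k:ℝ)+5)*(1-y)^2*(1-y^(k+4))
      = -((1-y)^3 * (2*Q - ((k:ℝ)+5)*G1)) := by
    linear_combination (2*(1-y)^2)*i1 + (2*(1-y))*i2 + (-4)*g5 + (-((k:ℝ)+5)*(1-y)^2)*g4
  -- A + B + C = -(y (1-y)^3 U)
  have e3 : (2 - 2*y^(k+5) - ((k:ℝ)+5)*(1-y)*(1+y^(k+4)))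
        + ((k:ℝ)+5)*(1-y)^2*(1-y^(k+4))
        + (-2*(1-y)^2*(1-y^(k+5)))
      = -(y*(1-y)^3*U) := by
    linear_combination (y*(1-y))*i2 + (-2*y*(2-y))*g5 + (-(y*(1-y)^2))*i3
  have hf1 : (2 - 2*y^(k+5) - ((k:ℝ)+5)*(1-y)*(1+y^(k+4)))
        + ((k:ℝ)+5)*(1-y)^2*(1-y^(k+4))
        + (-2*(1-y)^2*(1-y^(k+5))) < 0 := by
    rw [e3]
    have : 0 < y*(1-y)^3*U := by
      apply mul_pos (mul_pos hy0 (pow_pos (by linarith : (0:ℝ) < 1-y) 3)) hu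
    linarith
  have hA0 : (2 - 2*y^(k+5) - ((k:ℝ)+5)*(1-y)*(1+y^(k+4))) ≤ 0 := by
    have hS : 0 ≤ (1-y)^3 * (2*Q - ((k:ℝ)+5)*G1) := by
      apply mul_nonneg (by positivity) (by linarith)
    linarith [e2, hBeta]
  have m1 : (0:ℝ) ≤ x - 1 := by linarith
  have t1 : (x-1)*(2*(2 - 2*y^(k+5) - ((k:ℝ)+5)*(1-y)*(1+y^(k+4)))
      + ((k:ℝ)+5)*(1-y)^2*(1-y^(k+4))) ≤ 0 := by
    rw [e2]
    have hS : 0 ≤ (1-y)^3 * (2*Q - ((k:ℝ)+5)*G1) := by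
      apply mul_nonneg (by positivity) (by linarith)
    have h2 := mul_nonneg m1 hS
    linarith [h2]
  have t2 : (2 - 2*y^(k+5) - ((k:ℝ)+5)*(1-y)*(1+y^(k+4)))*(x-1)^2 ≤ 0 := by
    have h2 := mul_nonneg (neg_nonneg.mpr hA0) (sq_nonneg (x-1))
    linarith [h2]
  have hiden : (2 - 2*y^(k+5) - ((k:ℝ)+5)*(1-y)*(1+y^(k+4)))*x^2
      + (((k:ℝ)+5)*(1-y)^2*(1-y^(k+4)))*x
      + (-2*(1-y)^2*(1-y^(k+5)))
    = ((2 - 2*y^(k+5) - ((k:ℝ)+5)*(1-y)*(1+y^(k+4)))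
        + ((k:ℝ)+5)*(1-y)^2*(1-y^(k+4))
        + (-2*(1-y)^2*(1-y^(k+5))))
      + (x-1)*(2*(2 - 2*y^(k+5) - ((k:ℝ)+5)*(1-y)*(1+y^(k+4)))
        + ((k:ℝ)+5)*(1-y)^2*(1-y^(k+4)))
      + (2 - 2*y^(k+5) - ((k:ℝ)+5)*(1-y)*(1+y^(k+4)))*(x-1)^2 := by ring
  linarith [heq', hf1, t1, t2, hiden]
end

section
/- Let d ≥ 6 and let y ∈ (0,1). With α = 2 − 2y^{d−1} − (d−1)(1−y)(1+y^{d−2}) and β = (d−1)(1−y)²(1−y^{d−2}), the quantity 2α + β is negative. -/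
/-- Numerator of the (3,3) Padé approximant of `exp (-t)` (scaled). -/
def NP (t : ℝ) : ℝ := 120 - 60*t + 12*t^2 - t^3

/-- Denominator of the (3,3) Padé approximant of `exp (-t)` (scaled). -/
def DP (t : ℝ) : ℝ := 120 + 60*t + 12*t^2 + t^3

lemma DP_pos {t : ℝ} (ht : 0 ≤ t) : 0 < DP t := by
  unfold DP
  nlinarith [pow_nonneg ht 3, sq_nonneg t, ht]

lemma NP_anti {a b : ℝ} (_ha : 0 ≤ a) (hab : a ≤ b) : NP b ≤ NP a := by
  unfold NP
  nlinarith [mul_nonneg (sub_nonneg.2 hab) (sq_nonneg (2*(b-a)+3*a-12)),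
    mul_nonneg (sub_nonneg.2 hab) (sq_nonneg (a-4)), sub_nonneg.2 hab]

lemma submult {a b : ℝ} (ha : 0 ≤ a) (hb : 0 ≤ b) :
    NP (a+b) * (DP a * DP b) ≤ NP a * NP b * DP (a+b) := by
  unfold NP DP
  nlinarith [mul_nonneg ha (pow_nonneg hb 6), mul_nonneg (pow_nonneg ha 6) hb,
    mul_nonneg (pow_nonneg ha 2) (pow_nonneg hb 5),
    mul_nonneg (pow_nonneg ha 5) (pow_nonneg hb 2),
    mul_nonneg (pow_nonneg ha 3) (pow_nonneg hb 4),
    mul_nonneg (pow_nonneg ha 4) (pow_nonneg hb 3),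
    mul_nonneg (pow_nonneg ha 3) (pow_nonneg hb 6),
    mul_nonneg (pow_nonneg ha 6) (pow_nonneg hb 3),
    mul_nonneg (pow_nonneg ha 4) (pow_nonneg hb 5),
    mul_nonneg (pow_nonneg ha 5) (pow_nonneg hb 4)]

lemma pade {y u : ℝ} (hy0 : 0 < y) (hu : 0 ≤ u)
    (hstep : NP u ≤ y * DP u) (n : ℕ) :
    NP ((n:ℝ)*u) ≤ y^n * DP ((n:ℝ)*u) := by
  induction n with
  | zero => norm_num [NP, DP]
  | succ n ih =>
    have ha : (0:ℝ) ≤ (n:ℝ)*u := by positivity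
    push_cast
    rw [show ((n:ℝ)+1)*u = (n:ℝ)*u + u from by ring, pow_succ]
    rcases Nat.eq_zero_or_pos n with rfl | hn
    · simpa using hstep
    rcases le_or_gt (NP ((n:ℝ)*u)) 0 with hN | hN
    · have h1 : NP ((n:ℝ)*u + u) ≤ NP ((n:ℝ)*u) := NP_anti ha (by linarith)
      have h2 : 0 < y^n * y * DP ((n:ℝ)*u + u) :=
        mul_pos (mul_pos (pow_pos hy0 n) hy0) (DP_pos (by linarith))
      linarith
    · have hn1 : (1:ℝ) ≤ (n:ℝ) := by exact_mod_cast hn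
      have hun : u ≤ (n:ℝ)*u := by nlinarith [mul_nonneg (sub_nonneg.2 hn1) hu]
      have hNu : 0 ≤ NP u := le_trans hN.le (NP_anti hu hun)
      have hDn : 0 < DP ((n:ℝ)*u) := DP_pos ha
      have hDu : 0 < DP u := DP_pos hu
      have hD1 : 0 < DP ((n:ℝ)*u + u) := DP_pos (by linarith)
      have hmul : NP ((n:ℝ)*u) * NP u ≤ (y^n * DP ((n:ℝ)*u)) * (y * DP u) :=
        mul_le_mul ih hstep hNu (by positivity)
      have hsub := submult ha hu
      have h5 := mul_le_mul_of_nonneg_right hmul hD1.le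
      have key : NP ((n:ℝ)*u + u) * (DP ((n:ℝ)*u) * DP u)
          ≤ (y^n * y * DP ((n:ℝ)*u + u)) * (DP ((n:ℝ)*u) * DP u) := by
        nlinarith [h5, hsub]
      exact le_of_mul_le_mul_right key (mul_pos hDn hDu)

lemma step_valid {x : ℝ} (h0 : 0 < x) (h1 : x ≤ 3/5) :
    NP (x + x^2/2 + x^3/3 + x^4) ≤ (1-x) * DP (x + x^2/2 + x^3/3 + x^4) := by
  unfold NP DP
  have h35 : (0:ℝ) ≤ 3/5 - x := by linarith
  nlinarith [mul_nonneg h35 (pow_nonneg h0.le 4), mul_nonneg h35 (pow_nonneg h0.le 5),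
    mul_nonneg h35 (pow_nonneg h0.le 6), mul_nonneg h35 (pow_nonneg h0.le 7),
    mul_nonneg h35 (pow_nonneg h0.le 8), mul_nonneg h35 (pow_nonneg h0.le 9),
    mul_nonneg h35 (pow_nonneg h0.le 12),
    pow_nonneg h0.le 4, pow_nonneg h0.le 11, pow_nonneg h0.le 12]

lemma main_ineq {M x : ℝ} (hM : 5 ≤ M) (h0 : 0 < x) (h1 : x ≤ 3/5)
    (hw : M*x ≤ 14/3) :
    0 < ((M+1)*x*(2-x) - 4) * DP (M*(x + x^2/2 + x^3/3 + x^4))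
      + NP (M*(x + x^2/2 + x^3/3 + x^4)) * ((M+1)*x*(2+x) + 4 - 4*x) := by
  unfold NP DP
  have hM0 : (0:ℝ) ≤ M := by linarith
  have h14 : (0:ℝ) ≤ 14/3 - M*x := by linarith
  have h35 : (0:ℝ) ≤ 3/5 - x := by linarith
  have hM5 : (0:ℝ) ≤ M - 5 := by linarith
  have hM5p : (0:ℝ) ≤ M + 5 := by linarith
  linarith [mul_nonneg h14 (mul_nonneg (pow_nonneg hM0 3) (pow_nonneg h0.le 4)),
    mul_nonneg h14 (mul_nonneg (pow_nonneg hM0 3) (pow_nonneg h0.le 5)),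
    mul_nonneg h14 (mul_nonneg (pow_nonneg hM0 3) (pow_nonneg h0.le 6)),
    mul_nonneg h14 (mul_nonneg (pow_nonneg hM0 3) (pow_nonneg h0.le 7)),
    mul_nonneg h14 (mul_nonneg (pow_nonneg hM0 3) (pow_nonneg h0.le 8)),
    mul_nonneg h14 (mul_nonneg (pow_nonneg hM0 3) (pow_nonneg h0.le 9)),
    mul_nonneg h14 (mul_nonneg (pow_nonneg hM0 3) (pow_nonneg h0.le 10)),
    mul_nonneg h14 (mul_nonneg (pow_nonneg hM0 3) (pow_nonneg h0.le 11)),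
    mul_nonneg h14 (mul_nonneg (pow_nonneg hM0 3) (pow_nonneg h0.le 12)),
    mul_nonneg h14 (mul_nonneg (pow_nonneg hM0 3) (pow_nonneg h0.le 13)),
    mul_nonneg h35 (mul_nonneg (pow_nonneg hM0 3) (pow_nonneg h0.le 6)),
    mul_nonneg h35 (mul_nonneg (pow_nonneg hM0 3) (pow_nonneg h0.le 7)),
    mul_nonneg h35 (mul_nonneg (pow_nonneg hM0 3) (pow_nonneg h0.le 8)),
    mul_nonneg h35 (mul_nonneg (pow_nonneg hM0 3) (pow_nonneg h0.le 9)),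
    mul_nonneg h35 (mul_nonneg (pow_nonneg hM0 3) (pow_nonneg h0.le 10)),
    mul_nonneg h35 (mul_nonneg (pow_nonneg hM0 3) (pow_nonneg h0.le 11)),
    mul_nonneg h35 (mul_nonneg (pow_nonneg hM0 3) (pow_nonneg h0.le 12)),
    mul_nonneg h35 (mul_nonneg (pow_nonneg hM0 3) (pow_nonneg h0.le 13)),
    mul_nonneg hM5 (mul_nonneg (pow_nonneg hM0 2) (pow_nonneg h0.le 3)),
    mul_nonneg hM5 (mul_nonneg (pow_nonneg hM0 2) (pow_nonneg h0.le 4)),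
    mul_nonneg hM5 (mul_nonneg (pow_nonneg hM0 2) (pow_nonneg h0.le 5)),
    mul_nonneg hM5 (mul_nonneg (pow_nonneg hM0 2) (pow_nonneg h0.le 6)),
    mul_nonneg (mul_nonneg hM5 hM5p) (mul_nonneg hM0 (pow_nonneg h0.le 3)),
    mul_nonneg (mul_nonneg hM5 hM5p) (mul_nonneg hM0 (pow_nonneg h0.le 4)),
    mul_nonneg (mul_nonneg hM5 hM5p) (mul_nonneg hM0 (pow_nonneg h0.le 6)),
    mul_pos (pow_pos (show (0:ℝ) < M by linarith) 3) (pow_pos h0 3),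
    mul_nonneg (pow_nonneg hM0 3) (pow_nonneg h0.le 4),
    mul_nonneg (pow_nonneg hM0 3) (pow_nonneg h0.le 5),
    mul_nonneg (pow_nonneg hM0 3) (pow_nonneg h0.le 6),
    mul_nonneg hM0 (pow_nonneg h0.le 5)]

/-- **Proposition 3.3**. If `d ≥ 6` and `y ∈ (0,1)`, then `2α + β` is negative, where
`α = 2 - 2y^{d-1} - (d-1)(1-y)(1+y^{d-2})` and `β = (d-1)(1-y)²(1-y^{d-2})`. -/
theorem stmt_15 (d : ℕ) (hd : 6 ≤ d) (y : ℝ) (hy : y ∈ Set.Ioo (0 : ℝ) 1) :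
    2 * (2 - 2 * y ^ (d - 1) - ((d : ℝ) - 1) * (1 - y) * (1 + y ^ (d - 2))) +
      ((d : ℝ) - 1) * (1 - y) ^ 2 * (1 - y ^ (d - 2)) < 0 := by
  obtain ⟨hy0, hy1⟩ := hy
  obtain ⟨m, rfl⟩ : ∃ m, d = m + 2 := ⟨d - 2, by omega⟩
  have h1 : m + 2 - 1 = m + 1 := by omega
  have h2 : m + 2 - 2 = m := by omega
  rw [h1, h2]
  have hx0 : 0 < 1 - y := by linarith
  have hcast : ((m + 2 : ℕ) : ℝ) - 1 = (m:ℝ) + 1 := by push_cast; ring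
  rw [hcast]
  rcases (by omega : m = 4 ∨ 5 ≤ m) with rfl | hm5
  · push_cast
    nlinarith [sq_nonneg ((1-y)^2*(10*(1-y)-14)), pow_pos hx0 4]
  · rw [pow_succ]
    have hM5 : (5:ℝ) ≤ (m:ℝ) := by exact_mod_cast hm5
    have hs0 : (0:ℝ) ≤ y^m := (pow_pos hy0 m).le
    have hC : (0:ℝ) ≤ ((m:ℝ)+1)*(1-y)*(2+(1-y)) + 4 - 4*(1-y) := by
      nlinarith [mul_nonneg (mul_nonneg (show (0:ℝ) ≤ (m:ℝ)+1 by linarith) hx0.le)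
        (show (0:ℝ) ≤ 2+(1-y) by linarith)]
    have hsC := mul_nonneg hs0 hC
    have hG : 0 < ((m:ℝ)+1)*(1-y)*(2-(1-y))
        + y^m*(((m:ℝ)+1)*(1-y)*(2+(1-y)) + 4 - 4*(1-y)) - 4 := by
      rcases le_or_gt (1-y) (3/5) with hx35 | hx35
      · rcases le_or_gt ((m:ℝ)*(1-y)) (14/3) with hw | hw
        · -- main case
          have hstep : NP ((1-y) + (1-y)^2/2 + (1-y)^3/3 + (1-y)^4)
              ≤ y * DP ((1-y) + (1-y)^2/2 + (1-y)^3/3 + (1-y)^4) := by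
            have h := step_valid hx0 hx35
            have e : (1:ℝ) - (1-y) = y := by ring
            rwa [e] at h
          have hu0 : (0:ℝ) ≤ (1-y) + (1-y)^2/2 + (1-y)^3/3 + (1-y)^4 := by
            have := pow_nonneg hx0.le 2
            have := pow_nonneg hx0.le 3
            have := pow_nonneg hx0.le 4
            linarith
          have hpade := pade hy0 hu0 hstep m
          have hmain := main_ineq hM5 hx0 hx35 hw
          have hD : 0 < DP ((m:ℝ)*((1-y) + (1-y)^2/2 + (1-y)^3/3 + (1-y)^4)) :=
            DP_pos (mul_nonneg (by positivity) hu0)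
          have h2' := mul_le_mul_of_nonneg_right hpade hC
          have hGD : 0 < (((m:ℝ)+1)*(1-y)*(2-(1-y))
              + y^m*(((m:ℝ)+1)*(1-y)*(2+(1-y)) + 4 - 4*(1-y)) - 4)
              * DP ((m:ℝ)*((1-y) + (1-y)^2/2 + (1-y)^3/3 + (1-y)^4)) := by
            nlinarith [hmain, h2']
          by_contra hle
          push_neg at hle
          nlinarith [hGD, mul_nonneg (neg_nonneg.2 hle) hD.le]
        · -- M x large
          have h31 := mul_nonneg (show (0:ℝ) ≤ (m:ℝ)*(1-y) - 14/3 by linarith)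
            (show (0:ℝ) ≤ 2-(1-y) by linarith)
          have h32 := mul_nonneg hx0.le (show (0:ℝ) ≤ 2-(1-y) by linarith)
          linarith [h31, h32, hsC]
      · -- x > 3/5
        have h21 : (0:ℝ) ≤ ((1-y) - 3/5)*(7/5 - (1-y)) :=
          mul_nonneg (by linarith) (by linarith)
        have h22 : (0:ℝ) ≤ (1-y)*(2-(1-y)) - 21/25 := by nlinarith [h21]
        have h23 := mul_nonneg (show (0:ℝ) ≤ (m:ℝ) - 5 by linarith) h22
        linarith [h21, h22, h23, hsC]
    linarith [hG]
end

section
/- Let d ≥ 6 and let y ∈ (0,1). With α = 2 − 2y^{d−1} − (d−1)(1−y)(1+y^{d−2}), β = (d−1)(1−y)²(1−y^{d−2}), and γ = −2(1−y)²(1−y^{d−1}), the quantity α + β + γ is negative. -/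
lemma sum_closed (y c : ℝ) : ∀ M : ℕ,
    (1 - y) ^ 3 * (∑ k ∈ Finset.range (M + 1), (k : ℝ) * (c - (k : ℝ)) * y ^ k)
      = c * (1 - y) * (y - ((M : ℝ) + 1) * y ^ (M + 1) + (M : ℝ) * y ^ (M + 2))
        - (y + y ^ 2 - ((M : ℝ) + 1) ^ 2 * y ^ (M + 1)
            + (2 * (M : ℝ) ^ 2 + 2 * (M : ℝ) - 1) * y ^ (M + 2) - (M : ℝ) ^ 2 * y ^ (M + 3)) := by
  intro M
  induction M with
  | zero => simp
  | succ M ih =>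
    rw [Finset.sum_range_succ, mul_add, ih]
    push_cast
    ring



/-- **Proposition 3.4**. If `d ≥ 6` and `y ∈ (0,1)`, then `α + β + γ` is negative, where
`α = 2 - 2y^{d-1} - (d-1)(1-y)(1+y^{d-2})`, `β = (d-1)(1-y)²(1-y^{d-2})` and
`γ = -2(1-y)²(1-y^{d-1})`. -/
theorem stmt_16 (d : ℕ) (hd : 6 ≤ d) (y : ℝ) (hy : y ∈ Set.Ioo (0 : ℝ) 1) :
    (2 - 2 * y ^ (d - 1) - ((d : ℝ) - 1) * (1 - y) * (1 + y ^ (d - 2))) +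
      ((d : ℝ) - 1) * (1 - y) ^ 2 * (1 - y ^ (d - 2)) +
      (-2 * (1 - y) ^ 2 * (1 - y ^ (d - 1))) < 0 := by
  obtain ⟨hy0, hy1⟩ := hy
  have h1y : 0 < 1 - y := by linarith
  have hd6 : (6 : ℝ) ≤ (d : ℝ) := by exact_mod_cast hd
  have hM : ((d - 5 : ℕ) : ℝ) = (d : ℝ) - 5 := by
    have : (5 : ℕ) ≤ d := by omega
    push_cast [this]; ring
  -- power rewrites
  have e1 : y ^ (d - 1) = y ^ (d - 5) * y ^ 4 := by
    rw [← pow_add]; congr 1; omega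
  have e2 : y ^ (d - 2) = y ^ (d - 5) * y ^ 3 := by
    rw [← pow_add]; congr 1; omega
  have e3 : y ^ (d - 5 + 1) = y ^ (d - 5) * y ^ 1 := by rw [← pow_add]
  have e4 : y ^ (d - 5 + 2) = y ^ (d - 5) * y ^ 2 := by rw [← pow_add]
  have e5 : y ^ (d - 5 + 3) = y ^ (d - 5) * y ^ 3 := by rw [← pow_add]
  set S : ℝ := ∑ k ∈ Finset.range (d - 4), (k : ℝ) * (((d : ℝ) - 4) - (k : ℝ)) * y ^ k with hSdef
  have key := sum_closed y ((d : ℝ) - 4) (d - 5)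
  rw [show d - 5 + 1 = d - 4 from by omega] at key
  have e6 : y ^ (d - 4) = y ^ (d - 5) * y ^ 1 := by rw [← pow_add]; congr 1; omega
  rw [e6, e4, e5, hM] at key
  -- key : (1-y)^3 * S = closed form in y and y^(d-5)
  have hz : 0 < y ^ (d - 5) := pow_pos hy0 _
  have hcube : 0 < (1 - y) ^ 3 := by positivity
  -- lower bound on S
  have hS_ge : ((d : ℝ) - 5) * y ^ (d - 5) ≤ S := by
    have hmem : d - 5 ∈ Finset.range (d - 4) := Finset.mem_range.mpr (by omega)
    have hnn : ∀ k ∈ Finset.range (d - 4), (0 : ℝ) ≤ (k : ℝ) * (((d : ℝ) - 4) - (k : ℝ)) * y ^ k := by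
      intro k hk
      have hk5 : k + 5 ≤ d := by have := Finset.mem_range.mp hk; omega
      have hkr : (k : ℝ) + 5 ≤ (d : ℝ) := by exact_mod_cast hk5
      exact mul_nonneg (mul_nonneg (Nat.cast_nonneg k) (by linarith)) (pow_nonneg hy0.le k)
    have := Finset.single_le_sum (f := fun k : ℕ => (k : ℝ) * (((d : ℝ) - 4) - (k : ℝ)) * y ^ k) hnn hmem
    have h' : ((d - 5 : ℕ) : ℝ) * (((d : ℝ) - 4) - ((d - 5 : ℕ) : ℝ)) * y ^ (d - 5) ≤ S := this
    rw [hM] at h'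
    calc ((d : ℝ) - 5) * y ^ (d - 5) = ((d : ℝ) - 5) * (((d : ℝ) - 4) - ((d : ℝ) - 5)) * y ^ (d - 5) := by ring
      _ ≤ S := h'
  -- the identity
  have hiden : (2 - 2 * y ^ (d - 1) - ((d : ℝ) - 1) * (1 - y) * (1 + y ^ (d - 2))) +
      ((d : ℝ) - 1) * (1 - y) ^ 2 * (1 - y ^ (d - 2)) +
      (-2 * (1 - y) ^ 2 * (1 - y ^ (d - 1)))
      = (1 - y) ^ 3 * (y ^ (d - 5) * y ^ 2 * (((d : ℝ) - 3) - 2 * y)) - (1 - y) ^ 3 * S := by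
    rw [key, e1, e2]
    ring
  rw [hiden]
  have hbound : y ^ (d - 5) * y ^ 2 * (((d : ℝ) - 3) - 2 * y) < ((d : ℝ) - 5) * y ^ (d - 5) := by
    have haux : y ^ 2 * (((d : ℝ) - 3) - 2 * y) < (d : ℝ) - 5 := by
      nlinarith [mul_nonneg (by linarith : (0 : ℝ) ≤ (d : ℝ) - 6)
          (by nlinarith : (0 : ℝ) ≤ 1 - y ^ 2),
        mul_pos (mul_pos h1y h1y) (by linarith : (0 : ℝ) < 1 + 2 * y)]
    calc y ^ (d - 5) * y ^ 2 * (((d : ℝ) - 3) - 2 * y)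
        = y ^ (d - 5) * (y ^ 2 * (((d : ℝ) - 3) - 2 * y)) := by ring
      _ < y ^ (d - 5) * ((d : ℝ) - 5) := by
          apply mul_lt_mul_of_pos_left haux hz
      _ = ((d : ℝ) - 5) * y ^ (d - 5) := by ring
  have h1 : (1 - y) ^ 3 * (y ^ (d - 5) * y ^ 2 * (((d : ℝ) - 3) - 2 * y))
      < (1 - y) ^ 3 * (((d : ℝ) - 5) * y ^ (d - 5)) := mul_lt_mul_of_pos_left hbound hcube
  have h2 : (1 - y) ^ 3 * (((d : ℝ) - 5) * y ^ (d - 5)) ≤ (1 - y) ^ 3 * S :=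
    mul_le_mul_of_nonneg_left hS_ge hcube.le
  linarith
end
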